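/- Let G = G₁ # G₂ be a 0-sum (disjoint union) of G₁ and G₂. Then Cut□(G) is normal if and only if both Cut□(G₁) and Cut□(G₂) are normal. -/

import Mathlib

open Finset

variable {V : Type} [DecidableEq V]

def cutFun (S : Finset V) : Sym2 V → ℤ :=
  Sym2.lift ⟨fun i j => |(if i ∈ S then (1 : ℤ) else 0) - (if j ∈ S then (1 : ℤ) else 0)|,
    fun i j => abs_sub_comm _ _⟩

def zSpan {ι : Type} (B : Set (ι → ℤ)) : Set (ι → ℤ) :=
  {x | ∃ (s : Finset (ι → ℤ)) (c : (ι → ℤ) → ℤ), ↑s ⊆ B ∧ x = ∑ b ∈ s, c b • b}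

def zPlus {ι : Type} (B : Set (ι → ℤ)) : Set (ι → ℤ) :=
  {x | ∃ (s : Finset (ι → ℤ)) (c : (ι → ℤ) → ℤ), ↑s ⊆ B ∧ (∀ b ∈ s, 0 ≤ c b) ∧
    x = ∑ b ∈ s, c b • b}

def toQ {ι : Type} (x : ι → ℤ) : ι → ℚ := fun i => (x i : ℚ)

def qPlus {ι : Type} (B : Set (ι → ℤ)) : Set (ι → ℚ) :=
  {x | ∃ (s : Finset (ι → ℤ)) (c : (ι → ℤ) → ℚ), ↑s ⊆ B ∧ (∀ b ∈ s, 0 ≤ c b) ∧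
    x = ∑ b ∈ s, c b • toQ b}

def AG (G : SimpleGraph V) : Set (↥G.edgeSet → ℤ) :=
  {x | ∃ S : Finset V, x = fun e => cutFun S e.1}

def XG (G : SimpleGraph V) : Set (Option ↥G.edgeSet → ℤ) :=
  {x | ∃ S : Finset V, x = fun o => Option.elim o 1 (fun e => cutFun S e.1)}

def IsNormal (G : SimpleGraph V) : Prop :=
  zPlus (XG G) = zSpan (XG G) ∩ toQ ⁻¹' qPlus (XG G)

def IsMinor {W : Type} (H : SimpleGraph W) (G : SimpleGraph V) : Prop :=
  ∃ f : W → Set V,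
    (∀ w, (G.induce (f w)).Connected) ∧
    (Pairwise fun w₁ w₂ => Disjoint (f w₁) (f w₂)) ∧
    (∀ w₁ w₂, H.Adj w₁ w₂ → ∃ a ∈ f w₁, ∃ b ∈ f w₂, G.Adj a b)

open Classical in
noncomputable def extZ {G : SimpleGraph V} (x : ↥G.edgeSet → ℤ) : Sym2 V → ℤ :=
  fun e => if h : e ∈ G.edgeSet then x ⟨e, h⟩ else 0

open Classical in
noncomputable def extQ {G : SimpleGraph V} (x : ↥G.edgeSet → ℚ) : Sym2 V → ℚ :=
  fun e => if h : e ∈ G.edgeSet then x ⟨e, h⟩ else 0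

/-!
Restricting from `E(G₁ ⊔ G₂)` to `E(G₁)` maps `(δ_G(S), 1)` to `(δ_{G₁}(S), 1)`, and extending
by zero maps `(δ_{G₁}(S), 1)` to `(δ_G(S ∩ V₁), 1)` (the homogenizing coordinate is `none`).
Both maps are linear, so they preserve `Z(X)`, `Z₊(X)` and `Q₊(X)`, and restriction undoes
extension; hence normality of `G₁ ⊔ G₂` passes to `G₁`.

Conversely, if `G₁` and `G₂` are normal, the two restrictions of `y ∈ Z(X_G) ∩ Q₊(X_G)` are
sums of generators, `y none` of them on each side since the homogenizing coordinate counts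
generators. Pairing `(δ_{G₁}(Sₖ), 1)` with `(δ_{G₂}(Tₖ), 1)` gives
`(δ_G((Sₖ ∩ V₁) ∪ (Tₖ ∩ V₂)), 1)`, and these sum to `y` because a vector on `E(G₁ ⊔ G₂)` is
determined by its two restrictions.
-/

open Set

section Cones

variable {ι κ : Type}

lemma toQ_injective : Function.Injective (toQ : (ι → ℤ) → ι → ℚ) :=
  Int.cast_injective.comp_left

lemma zSpan_eq_span (B : Set (ι → ℤ)) : zSpan B = Submodule.span ℤ B := by
  ext x
  rw [SetLike.mem_coe, Submodule.mem_span_iff_exists_finset_subset]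
  constructor
  · rintro ⟨s, c, hs, rfl⟩
    exact Submodule.mem_span_iff_exists_finset_subset.1 <|
      Submodule.sum_mem _ fun b hb => Submodule.smul_mem _ _ (Submodule.subset_span (hs hb))
  · rintro ⟨c, s, hs, -, rfl⟩
    exact ⟨s, c, hs, rfl⟩

lemma zPlus_eq_span (B : Set (ι → ℤ)) : zPlus B = Submodule.span ℕ B := by
  ext x
  constructor
  · rintro ⟨s, c, hs, hc, rfl⟩
    refine Submodule.sum_mem _ fun b hb => ?_
    rw [← Int.toNat_of_nonneg (hc b hb), natCast_zsmul]
    exact Submodule.smul_mem _ _ (Submodule.subset_span (hs hb))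
  · rw [SetLike.mem_coe, Submodule.mem_span_iff_exists_finset_subset]
    rintro ⟨c, s, hs, -, rfl⟩
    exact ⟨s, fun b => c b, hs, fun b _ => Int.natCast_nonneg _, by simp only [natCast_zsmul]⟩

lemma qPlus_eq_span (B : Set (ι → ℤ)) : qPlus B = Submodule.span ℚ≥0 (toQ '' B) := by
  classical
  ext x
  constructor
  · rintro ⟨s, c, hs, hc, rfl⟩
    refine Submodule.sum_mem _ fun b hb => ?_
    rw [← Rat.coe_toNNRat (c b) (hc b hb), NNRat.cast_smul_eq_nnqsmul]
    exact Submodule.smul_mem _ _ (Submodule.subset_span (mem_image_of_mem _ (hs hb)))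
  · rw [SetLike.mem_coe, Submodule.mem_span_iff_exists_finset_subset]
    rintro ⟨c, t, ht, -, rfl⟩
    obtain ⟨s, hs, rfl⟩ := Finset.subset_set_image_iff.1 ht
    refine ⟨s, fun b => c (toQ b), hs, fun b _ => (c (toQ b)).coe_nonneg, ?_⟩
    rw [Finset.sum_image toQ_injective.injOn]
    simp only [NNRat.cast_smul_eq_nnqsmul]

lemma zPlus_subset_zSpan_inter (B : Set (ι → ℤ)) : zPlus B ⊆ zSpan B ∩ toQ ⁻¹' qPlus B := by
  rintro x ⟨s, c, hs, hc, rfl⟩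
  refine ⟨⟨s, c, hs, rfl⟩, s, fun b => c b, hs, fun b hb => Int.cast_nonneg (hc b hb), ?_⟩
  ext i
  simp [toQ, Finset.sum_apply]

def partialReindex {M : Type} [Zero M] (φ : κ → Option ι) (x : ι → M) : κ → M :=
  fun j => (φ j).elim 0 x

def partialReindexₗ (R : Type) [Semiring R] {M : Type} [AddCommMonoid M] [Module R M]
    (φ : κ → Option ι) : (ι → M) →ₗ[R] (κ → M) where
  toFun := partialReindex φ
  map_add' x y := by funext j; simp only [partialReindex, Pi.add_apply]; cases φ j <;> simp
  map_smul' c x := by funext j; simp only [partialReindex, Pi.smul_apply]; cases φ j <;> simp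

lemma toQ_partialReindex (φ : κ → Option ι) (x : ι → ℤ) :
    toQ (partialReindex φ x) = partialReindex φ (toQ x) := by
  funext j; simp only [partialReindex, toQ]; cases φ j <;> simp [toQ]

variable {φ : κ → Option ι} {B : Set (ι → ℤ)} {B' : Set (κ → ℤ)}

lemma partialReindex_mapsTo_zSpan (h : MapsTo (partialReindex φ) B B') :
    MapsTo (partialReindex φ) (zSpan B) (zSpan B') := by
  rw [zSpan_eq_span, zSpan_eq_span]
  exact Submodule.mapsTo_span (f := partialReindexₗ ℤ φ) h

lemma partialReindex_mapsTo_zPlus (h : MapsTo (partialReindex φ) B B') :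
    MapsTo (partialReindex φ) (zPlus B) (zPlus B') := by
  rw [zPlus_eq_span, zPlus_eq_span]
  exact Submodule.mapsTo_span (f := partialReindexₗ ℕ φ) h

lemma partialReindex_mapsTo_qPlus (h : MapsTo (partialReindex φ) B B') :
    MapsTo (partialReindex φ) (toQ ⁻¹' qPlus B) (toQ ⁻¹' qPlus B') := by
  intro x hx
  rw [Set.mem_preimage, toQ_partialReindex, qPlus_eq_span]
  rw [Set.mem_preimage, qPlus_eq_span] at hx
  refine Submodule.mapsTo_span (f := partialReindexₗ ℚ≥0 φ) ?_ hx
  rintro _ ⟨b, hb, rfl⟩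
  exact ⟨_, h hb, toQ_partialReindex φ b⟩

lemma subset_zPlus_of_retract {σ : κ → Option ι} {π : ι → Option κ}
    (hσ : MapsTo (partialReindex σ) B B') (hπ : MapsTo (partialReindex π) B' B)
    (hπσ : ∀ x : ι → ℤ, partialReindex π (partialReindex σ x) = x)
    (hB' : zSpan B' ∩ toQ ⁻¹' qPlus B' ⊆ zPlus B') :
    zSpan B ∩ toQ ⁻¹' qPlus B ⊆ zPlus B := fun x ⟨hx, hxq⟩ =>
  hπσ x ▸ partialReindex_mapsTo_zPlus hπ
    (hB' ⟨partialReindex_mapsTo_zSpan hσ hx, partialReindex_mapsTo_qPlus hσ hxq⟩)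

end Cones

section Pairing

variable {M N : Type} [AddCommMonoid M] [AddCommMonoid N]

lemma List.Forall₂.mk_sum_mem_span {u : Set (M × N)} {l₁ : List M} {l₂ : List N}
    (h : List.Forall₂ (fun a b => (a, b) ∈ u) l₁ l₂) :
    (l₁.sum, l₂.sum) ∈ Submodule.span ℕ u := by
  induction h with
  | nil => exact zero_mem _
  | cons hab _ ih =>
    simpa only [List.sum_cons, Prod.mk_add_mk] using add_mem (Submodule.subset_span hab) ih

lemma map_list_sum_eq_length (w : M →+ ℤ) {l : List M} (hl : ∀ a ∈ l, w a = 1) :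
    w l.sum = l.length := by
  rw [map_list_sum, List.map_congr_left hl, List.map_const', List.sum_replicate, nsmul_one]

lemma mk_mem_span_prod {s : Set M} {t : Set N} (w₁ : M →+ ℤ) (w₂ : N →+ ℤ)
    (hs : ∀ a ∈ s, w₁ a = 1) (ht : ∀ b ∈ t, w₂ b = 1) {a : M} {b : N}
    (ha : a ∈ Submodule.span ℕ s) (hb : b ∈ Submodule.span ℕ t) (hab : w₁ a = w₂ b) :
    (a, b) ∈ Submodule.span ℕ (s ×ˢ t) := by
  rw [← Submodule.mem_toAddSubmonoid, Submodule.span_nat_eq_addSubmonoidClosure] at ha hb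
  obtain ⟨l₁, hl₁, rfl⟩ := AddSubmonoid.exists_list_of_mem_closure ha
  obtain ⟨l₂, hl₂, rfl⟩ := AddSubmonoid.exists_list_of_mem_closure hb
  have hlen : l₁.length = l₂.length := by
    rw [map_list_sum_eq_length w₁ fun a h => hs a (hl₁ a h),
      map_list_sum_eq_length w₂ fun b h => ht b (hl₂ b h)] at hab
    exact_mod_cast hab
  refine List.Forall₂.mk_sum_mem_span (List.forall₂_iff_zip.2 ⟨hlen, fun hab => ?_⟩)
  exact ⟨hl₁ _ (List.of_mem_zip hab).1, hl₂ _ (List.of_mem_zip hab).2⟩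

end Pairing

lemma cutFun_congr {S T : Finset V} {e : Sym2 V} (h : ∀ v ∈ e, v ∈ S ↔ v ∈ T) :
    cutFun S e = cutFun T e := by
  induction e using Sym2.ind with
  | _ a b =>
    simp only [cutFun, Sym2.lift_mk, h a (Sym2.mem_mk_left a b), h b (Sym2.mem_mk_right a b)]

lemma cutFun_empty (e : Sym2 V) : cutFun ∅ e = 0 := by
  induction e using Sym2.ind with
  | _ a b => simp [cutFun]

namespace SimpleGraph

variable {G H G₁ G₂ : SimpleGraph V} {W V₁ V₂ : Set V}

def liftCut (G : SimpleGraph V) (S : Finset V) : Option G.edgeSet → ℤ :=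
  fun o => o.elim 1 fun e => cutFun S e.1

lemma liftCut_mem_XG (G : SimpleGraph V) (S : Finset V) : liftCut G S ∈ XG G := ⟨S, rfl⟩

lemma isNormal_iff_subset :
    IsNormal G ↔ zSpan (XG G) ∩ toQ ⁻¹' qPlus (XG G) ⊆ zPlus (XG G) :=
  ⟨fun h => h.ge, fun h => (zPlus_subset_zSpan_inter _).antisymm h⟩

omit [DecidableEq V] in
lemma mem_of_mem_edgeSet (hW : ∀ ⦃a b⦄, G.Adj a b → a ∈ W ∧ b ∈ W) {e : Sym2 V}
    (he : e ∈ G.edgeSet) {v : V} (hv : v ∈ e) : v ∈ W := by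
  induction e using Sym2.ind with
  | _ a b => rcases Sym2.mem_iff.1 hv with rfl | rfl; exacts [(hW he).1, (hW he).2]

lemma liftCut_congr (hW : ∀ ⦃a b⦄, G.Adj a b → a ∈ W ∧ b ∈ W) {S T : Finset V}
    (h : ∀ v ∈ W, v ∈ S ↔ v ∈ T) : liftCut G S = liftCut G T := by
  funext o
  cases o with
  | none => rfl
  | some e => exact cutFun_congr fun v hv => h v (mem_of_mem_edgeSet hW e.2 hv)

omit [DecidableEq V] in
lemma mem_edgeSet_sup {e : Sym2 V} (he : e ∈ (G₁ ⊔ G₂).edgeSet) :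
    e ∈ G₁.edgeSet ∨ e ∈ G₂.edgeSet := by
  rwa [edgeSet_sup] at he

def restrictIdx (h : H ≤ G) : Option H.edgeSet → Option (Option G.edgeSet) :=
  fun o => some (o.map (Set.inclusion (edgeSet_mono h)))

open Classical in
noncomputable def extendIdx (H G : SimpleGraph V) : Option G.edgeSet → Option (Option H.edgeSet) :=
  fun o => o.elim (some none) fun e => if h : e.1 ∈ H.edgeSet then some (some ⟨e.1, h⟩) else none

lemma restrict_liftCut (h : H ≤ G) (S : Finset V) :
    partialReindex (restrictIdx h) (liftCut G S) = liftCut H S := by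
  funext o; cases o <;> rfl

lemma mapsTo_restrict (h : H ≤ G) : MapsTo (partialReindex (restrictIdx h)) (XG G) (XG H) := by
  rintro _ ⟨S, rfl⟩
  exact ⟨S, restrict_liftCut h S⟩

omit [DecidableEq V] in
lemma restrict_extend {M : Type} [Zero M] (h : H ≤ G) (x : Option H.edgeSet → M) :
    partialReindex (restrictIdx h) (partialReindex (extendIdx H G) x) = x := by
  funext o
  cases o with
  | none => rfl
  | some e => exact congrArg (Option.elim · 0 x) (dif_pos e.2)

omit [DecidableEq V] in
lemma eq_of_restrict_eq {M : Type} [Zero M] {x y : Option (G₁ ⊔ G₂).edgeSet → M}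
    (h₁ : partialReindex (restrictIdx le_sup_left) x =
      partialReindex (restrictIdx le_sup_left) y)
    (h₂ : partialReindex (restrictIdx le_sup_right) x =
      partialReindex (restrictIdx le_sup_right) y) :
    x = y := by
  funext o
  cases o with
  | none => exact congrFun h₁ none
  | some e =>
    rcases mem_edgeSet_sup e.2 with he | he
    exacts [congrFun h₁ (some ⟨e.1, he⟩), congrFun h₂ (some ⟨e.1, he⟩)]

section DisjointSup

variable (h₁ : ∀ ⦃a b⦄, G₁.Adj a b → a ∈ V₁ ∧ b ∈ V₁) (h₂ : ∀ ⦃a b⦄, G₂.Adj a b → a ∈ V₂ ∧ b ∈ V₂)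
  (hdisj : Disjoint V₁ V₂)

include h₁ h₂ hdisj

open Classical in
lemma extend_liftCut (S : Finset V) :
    partialReindex (extendIdx G₁ (G₁ ⊔ G₂)) (liftCut G₁ S) =
      liftCut (G₁ ⊔ G₂) (S.filter (· ∈ V₁)) := by
  funext o
  cases o with
  | none => rfl
  | some e =>
    simp only [partialReindex, extendIdx, liftCut, Option.elim]
    split_ifs with he
    · exact cutFun_congr fun v hv => by simp [mem_of_mem_edgeSet h₁ he hv]
    · have he₂ : e.1 ∈ G₂.edgeSet := (mem_edgeSet_sup e.2).resolve_left he
      rw [← cutFun_empty e.1]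
      exact cutFun_congr fun v hv => by
        simp [hdisj.notMem_of_mem_right (mem_of_mem_edgeSet h₂ he₂ hv)]

lemma mapsTo_extend :
    MapsTo (partialReindex (extendIdx G₁ (G₁ ⊔ G₂))) (XG G₁) (XG (G₁ ⊔ G₂)) := by
  rintro _ ⟨S, rfl⟩
  exact ⟨_, extend_liftCut h₁ h₂ hdisj S⟩

lemma exists_liftCut_restrict_eq (S T : Finset V) :
    ∃ U, partialReindex (restrictIdx le_sup_left) (liftCut (G₁ ⊔ G₂) U) = liftCut G₁ S ∧
      partialReindex (restrictIdx le_sup_right) (liftCut (G₁ ⊔ G₂) U) = liftCut G₂ T := by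
  classical
  refine ⟨S.filter (· ∈ V₁) ∪ T.filter (· ∈ V₂), ?_, ?_⟩ <;> rw [restrict_liftCut]
  · exact liftCut_congr h₁ fun v hv => by simp [hv, hdisj.notMem_of_mem_left hv]
  · exact liftCut_congr h₂ fun v hv => by simp [hv, hdisj.notMem_of_mem_right hv]

lemma mem_span_XG_sup {y : Option (G₁ ⊔ G₂).edgeSet → ℤ}
    (hy : (partialReindex (restrictIdx le_sup_left) y, partialReindex (restrictIdx le_sup_right) y)
      ∈ Submodule.span ℕ (XG G₁ ×ˢ XG G₂)) :
    y ∈ Submodule.span ℕ (XG (G₁ ⊔ G₂)) := by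
  let P := (partialReindexₗ ℕ (M := ℤ) (restrictIdx (le_sup_left : G₁ ≤ G₁ ⊔ G₂))).prod
    (partialReindexₗ ℕ (restrictIdx (le_sup_right : G₂ ≤ G₁ ⊔ G₂)))
  have hsub : XG G₁ ×ˢ XG G₂ ⊆ P '' XG (G₁ ⊔ G₂) := by
    rintro ⟨_, _⟩ ⟨⟨S, rfl⟩, ⟨T, rfl⟩⟩
    obtain ⟨U, hU₁, hU₂⟩ := exists_liftCut_restrict_eq h₁ h₂ hdisj S T
    exact ⟨liftCut _ U, liftCut_mem_XG _ U, Prod.ext hU₁ hU₂⟩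
  obtain ⟨z, hz, hPz⟩ := (Submodule.span_image P ▸ Submodule.span_mono hsub hy :
    _ ∈ (Submodule.span ℕ (XG (G₁ ⊔ G₂))).map P)
  rwa [← eq_of_restrict_eq (congrArg Prod.fst hPz) (congrArg Prod.snd hPz)]

theorem isNormal_of_isNormal_sup (hN : IsNormal (G₁ ⊔ G₂)) : IsNormal G₁ := by
  rw [isNormal_iff_subset] at hN ⊢
  exact subset_zPlus_of_retract (mapsTo_extend h₁ h₂ hdisj) (mapsTo_restrict le_sup_left)
    (restrict_extend le_sup_left) hN

theorem isNormal_sup (hN₁ : IsNormal G₁) (hN₂ : IsNormal G₂) : IsNormal (G₁ ⊔ G₂) := by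
  rw [isNormal_iff_subset] at hN₁ hN₂ ⊢
  rintro y ⟨hy, hyq⟩
  have hy₁ := hN₁ ⟨partialReindex_mapsTo_zSpan (mapsTo_restrict le_sup_left) hy,
    partialReindex_mapsTo_qPlus (mapsTo_restrict le_sup_left) hyq⟩
  have hy₂ := hN₂ ⟨partialReindex_mapsTo_zSpan (mapsTo_restrict le_sup_right) hy,
    partialReindex_mapsTo_qPlus (mapsTo_restrict le_sup_right) hyq⟩
  rw [zPlus_eq_span] at hy₁ hy₂ ⊢
  have hone {G : SimpleGraph V} : ∀ x ∈ XG G, Pi.evalAddMonoidHom (fun _ => ℤ) none x = 1 := by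
    rintro _ ⟨S, rfl⟩; rfl
  exact mem_span_XG_sup h₁ h₂ hdisj (mk_mem_span_prod (Pi.evalAddMonoidHom _ none)
    (Pi.evalAddMonoidHom _ none) hone hone hy₁ hy₂ rfl)

end DisjointSup

end SimpleGraph

theorem stmt7 (G₁ G₂ : SimpleGraph V) (V₁ V₂ : Set V)
    (h₁ : ∀ ⦃a b⦄, G₁.Adj a b → a ∈ V₁ ∧ b ∈ V₁)
    (h₂ : ∀ ⦃a b⦄, G₂.Adj a b → a ∈ V₂ ∧ b ∈ V₂)
    (hdisj : V₁ ∩ V₂ = ∅) :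
    IsNormal (G₁ ⊔ G₂) ↔ (IsNormal G₁ ∧ IsNormal G₂) := by
  have hdisj' : Disjoint V₁ V₂ := Set.disjoint_iff_inter_eq_empty.2 hdisj
  refine ⟨fun hN => ⟨SimpleGraph.isNormal_of_isNormal_sup h₁ h₂ hdisj' hN, ?_⟩,
    fun ⟨hN₁, hN₂⟩ => SimpleGraph.isNormal_sup h₁ h₂ hdisj' hN₁ hN₂⟩
  exact SimpleGraph.isNormal_of_isNormal_sup h₂ h₁ hdisj'.symm (sup_comm G₁ G₂ ▸ hN)
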